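/- For the type A(2k,2ℓ)^{(4)} data and for each i ∈ {1,2}: if u, v and u+v all lie in Ṙ₀(i)^× and ‖u‖ = ‖v‖ ≤ ‖u+v‖ (Euclidean norms), then S_{u+v}(i) ⊆ S_u(i) + S_v(i); that is, every m ∈ ℤ with u+v+mδ ∈ R₀(i)^× can be written m = m₁ + m₂ with u + m₁δ ∈ R₀(i)^× and v + m₂δ ∈ R₀(i)^×. (Property (2.8) of the paper for this type.) -/

import Mathlib

/-- The ambient real vector space with basis `δ, ε₁, …, ε_k, δ₁, …, δ_ℓ`. -/
abbrev Vkl (k l : ℕ) := ℝ × (Fin k → ℝ) × (Fin l → ℝ)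

/-- The basis vector `δ`. -/
def del {k l : ℕ} : Vkl k l := (1, 0, 0)

/-- The basis vector `ε_i`. -/
def eps {k l : ℕ} (i : Fin k) : Vkl k l := (0, Pi.single i 1, 0)

/-- The basis vector `δ_j`. -/
def dl {k l : ℕ} (j : Fin l) : Vkl k l := (0, 0, Pi.single j 1)

/-- The symmetric bilinear form with `B(δ,·) = 0`, `B(ε_i,ε_r) = δ_{ir}`,
`B(δ_j,δ_s) = -δ_{js}` and `B(ε_i,δ_j) = 0`. -/
def B {k l : ℕ} (v w : Vkl k l) : ℝ :=
  (∑ i, v.2.1 i * w.2.1 i) - (∑ j, v.2.2 j * w.2.2 j)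

/-- The set of signs `{1, -1}`. -/
def sgns : Set ℝ := {1, -1}

/-- The nonzero roots of the first affine component of the even part,
for type `A(2k,2ℓ)⁽⁴⁾`. -/
def R01x (k l : ℕ) : Set (Vkl k l) :=
  {v | ∃ (m : ℤ) (σ : ℝ) (j : Fin l), σ ∈ sgns ∧
    v = (2 * m + 1) • del + σ • dl j} ∪
  {v | ∃ (m : ℤ) (σ τ : ℝ) (j s : Fin l), σ ∈ sgns ∧ τ ∈ sgns ∧ j ≠ s ∧
    v = (2 * m) • del + σ • dl j + τ • dl s} ∪
  {v | ∃ (m : ℤ) (σ : ℝ) (j : Fin l), σ ∈ sgns ∧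
    v = (4 * m) • del + σ • ((2 : ℝ) • dl j)}

/-- The nonzero roots of the second affine component of the even part,
for type `A(2k,2ℓ)⁽⁴⁾`. -/
def R02x (k l : ℕ) : Set (Vkl k l) :=
  {v | ∃ (m : ℤ) (σ : ℝ) (i : Fin k), σ ∈ sgns ∧
    v = (2 * m) • del + σ • eps i} ∪
  {v | ∃ (m : ℤ) (σ τ : ℝ) (i r : Fin k), σ ∈ sgns ∧ τ ∈ sgns ∧ i ≠ r ∧
    v = (2 * m) • del + σ • eps i + τ • eps r} ∪
  {v | ∃ (m : ℤ) (σ : ℝ) (i : Fin k), σ ∈ sgns ∧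
    v = (4 * m + 2) • del + σ • ((2 : ℝ) • eps i)}

/-- The Euclidean norm on `Vkl k l` for which `δ, ε₁, …, ε_k, δ₁, …, δ_ℓ` are
orthonormal. -/
noncomputable def nrm {k l : ℕ} (v : Vkl k l) : ℝ :=
  Real.sqrt (v.1 ^ 2 + ∑ i, (v.2.1 i) ^ 2 + ∑ j, (v.2.2 j) ^ 2)

/-!
Both `R₀(1)^×` and `R₀(2)^×` consist of three families of roots `u + mδ`: a short, a middle and a
long one, with `‖u‖² = 1, 2, 4` respectively, each with its own residue class of `m`. Hence `S_u(i)`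
depends only on `‖u‖`, and the claim reduces to the arithmetic of these residue classes. The only
cases where that arithmetic fails are excluded by a coordinate-sum count: `±δ_j ± δ_s` is never
`±δ_t`, and `±2ε_i ± 2ε_r` is never `±2ε_t`.
-/

open Finset
open scoped Pointwise

lemma sq_eq_one_of_mem_sgns {σ : ℝ} (hσ : σ ∈ sgns) : σ ^ 2 = 1 := by
  rcases hσ with rfl | rfl <;> norm_num

lemma add_ne_of_mem_sgns {σ τ ρ : ℝ} (hσ : σ ∈ sgns) (hτ : τ ∈ sgns) (hρ : ρ ∈ sgns) :
    σ + τ ≠ ρ := by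
  rcases hσ with rfl | rfl <;> rcases hτ with rfl | rfl <;> rcases hρ with rfl | rfl <;> norm_num

def axialVectors (n : ℕ) (c : ℝ) : Set (Fin n → ℝ) :=
  {f | ∃ σ ∈ sgns, ∃ j, f = Pi.single j (σ * c)}

def diagonalVectors (n : ℕ) : Set (Fin n → ℝ) :=
  {f | ∃ σ ∈ sgns, ∃ τ ∈ sgns, ∃ j s, j ≠ s ∧ f = Pi.single j σ + Pi.single s τ}

section Coordinates

variable {n : ℕ}

lemma sum_sq_of_mem_axialVectors {c : ℝ} {f : Fin n → ℝ} (hf : f ∈ axialVectors n c) :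
    ∑ x, f x ^ 2 = c ^ 2 := by
  obtain ⟨σ, hσ, j, rfl⟩ := hf
  simp [Pi.single_apply, ite_pow, mul_pow, sq_eq_one_of_mem_sgns hσ]

lemma sum_sq_of_mem_diagonalVectors {f : Fin n → ℝ} (hf : f ∈ diagonalVectors n) :
    ∑ x, f x ^ 2 = 2 := by
  obtain ⟨σ, hσ, τ, hτ, j, s, hjs, rfl⟩ := hf
  have hsq : ∀ x, (Pi.single j σ + Pi.single s τ : Fin n → ℝ) x ^ 2 =
      (Pi.single j (σ ^ 2) : Fin n → ℝ) x + (Pi.single s (τ ^ 2) : Fin n → ℝ) x := by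
    intro x
    rcases eq_or_ne x j with rfl | hj
    · simp [hjs]
    · rcases eq_or_ne x s with rfl | hs <;> simp [*]
  rw [sum_congr rfl fun x _ => hsq x, sum_add_distrib]
  simp [sq_eq_one_of_mem_sgns hσ, sq_eq_one_of_mem_sgns hτ, one_add_one_eq_two]

lemma add_notMem_axialVectors {c : ℝ} (hc : c ≠ 0) {f g : Fin n → ℝ}
    (hf : f ∈ axialVectors n c) (hg : g ∈ axialVectors n c) : f + g ∉ axialVectors n c := by
  obtain ⟨σ, hσ, i, rfl⟩ := hf
  obtain ⟨τ, hτ, j, rfl⟩ := hg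
  rintro ⟨ρ, hρ, t, h⟩
  have hsum := congrArg (fun f : Fin n → ℝ => ∑ x, f x) h
  simp only [Pi.add_apply, sum_add_distrib, sum_pi_single', mem_univ, if_true] at hsum
  exact add_ne_of_mem_sgns hσ hτ hρ (mul_right_cancel₀ hc (by linarith))

end Coordinates

section Norm

variable {k l : ℕ}

def nrmSq (v : Vkl k l) : ℝ :=
  v.1 ^ 2 + ∑ i, v.2.1 i ^ 2 + ∑ j, v.2.2 j ^ 2

lemma nrmSq_nonneg (v : Vkl k l) : 0 ≤ nrmSq v := by
  unfold nrmSq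
  positivity

lemma nrm_eq_nrm_iff {v w : Vkl k l} : nrm v = nrm w ↔ nrmSq v = nrmSq w :=
  Real.sqrt_inj (nrmSq_nonneg v) (nrmSq_nonneg w)

lemma nrm_le_nrm_iff {v w : Vkl k l} : nrm v ≤ nrm w ↔ nrmSq v ≤ nrmSq w :=
  Real.sqrt_le_sqrt_iff (nrmSq_nonneg w)

lemma nrmSq_eq_sum_sq_snd_fst {v : Vkl k l} (h₁ : v.1 = 0) (h₃ : v.2.2 = 0) :
    nrmSq v = ∑ i, v.2.1 i ^ 2 := by
  simp [nrmSq, h₁, h₃]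

lemma nrmSq_eq_sum_sq_snd_snd {v : Vkl k l} (h₁ : v.1 = 0) (h₂ : v.2.1 = 0) :
    nrmSq v = ∑ j, v.2.2 j ^ 2 := by
  simp [nrmSq, h₁, h₂]

end Norm

section FirstComponent

variable {k l : ℕ}

lemma add_zsmul_del_mem_R01x_iff {u : Vkl k l} (hu : u.1 = 0) {m : ℤ} :
    u + m • del ∈ R01x k l ↔ u.2.1 = 0 ∧
      (u.2.2 ∈ axialVectors l 1 ∧ Odd m ∨ u.2.2 ∈ diagonalVectors l ∧ Even m ∨
        u.2.2 ∈ axialVectors l 2 ∧ 4 ∣ m) := by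
  constructor
  · rintro ((⟨m', σ, j, hσ, he⟩ | ⟨m', σ, τ, j, s, hσ, hτ, hjs, he⟩) | ⟨m', σ, j, hσ, he⟩) <;>
      simp [Prod.ext_iff, del, dl, hu, ← Pi.single_smul] at he <;>
      rcases he with ⟨hm, h₂, h₃⟩
    · exact ⟨h₂, Or.inl ⟨⟨σ, hσ, j, by rw [h₃, mul_one]⟩, m',
        (Int.cast_inj (α := ℝ)).1 (by push_cast; exact hm)⟩⟩
    · exact ⟨h₂, Or.inr (Or.inl ⟨⟨σ, hσ, τ, hτ, j, s, hjs, h₃⟩,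
        even_iff_two_dvd.2 ⟨m', (Int.cast_inj (α := ℝ)).1 (by push_cast; exact hm)⟩⟩)⟩
    · exact ⟨h₂, Or.inr (Or.inr ⟨⟨σ, hσ, j, h₃⟩, m',
        (Int.cast_inj (α := ℝ)).1 (by push_cast; exact hm)⟩)⟩
  · rintro ⟨h₂, ⟨⟨σ, hσ, j, h₃⟩, m', rfl⟩ | ⟨⟨σ, hσ, τ, hτ, j, s, hjs, h₃⟩, m', rfl⟩ |
      ⟨⟨σ, hσ, j, h₃⟩, m', rfl⟩⟩
    · exact Or.inl (Or.inl ⟨m', σ, j, hσ, by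
        simp [Prod.ext_iff, del, dl, hu, h₂, h₃, ← Pi.single_smul]⟩)
    · exact Or.inl (Or.inr ⟨m', σ, τ, j, s, hσ, hτ, hjs, by
        simp [Prod.ext_iff, del, dl, hu, h₂, h₃, ← Pi.single_smul]; ring⟩)
    · exact Or.inr ⟨m', σ, j, hσ, by
        simp [Prod.ext_iff, del, dl, hu, h₂, h₃, ← Pi.single_smul]⟩

/-- `S₁ c` is the set `S_u(1)` of every `u ∈ Ṙ₀(1)^×` with `‖u‖² = c`. -/
def S₁ (c : ℝ) : Set ℤ :=
  {m | c = 1 ∧ Odd m ∨ c = 2 ∧ Even m ∨ c = 4 ∧ 4 ∣ m}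

lemma one_le_of_mem_S₁ {c : ℝ} {m : ℤ} (hm : m ∈ S₁ c) : 1 ≤ c := by
  rcases hm with ⟨rfl, -⟩ | ⟨rfl, -⟩ | ⟨rfl, -⟩ <;> norm_num

lemma even_of_mem_S₁ {d : ℝ} {m : ℤ} (hm : m ∈ S₁ d) (hd : d ≠ 1) : Even m := by
  rcases hm with ⟨rfl, -⟩ | ⟨-, h⟩ | ⟨-, h⟩
  exacts [absurd rfl hd, h, even_iff_two_dvd.2 (dvd_trans ⟨2, by norm_num⟩ h)]

lemma S₁_subset_add {c d : ℝ} (hc : (S₁ c).Nonempty) (hcd : c ≤ d) (hd : d ≠ 1) :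
    S₁ d ⊆ S₁ c + S₁ c := by
  obtain ⟨m₀, hm₀⟩ := hc
  intro m hm
  rw [Set.mem_add]
  rcases hm₀ with ⟨rfl, -⟩ | ⟨rfl, -⟩ | ⟨rfl, -⟩
  · exact ⟨1, Or.inl ⟨rfl, odd_one⟩, m - 1,
      Or.inl ⟨rfl, (even_of_mem_S₁ hm hd).sub_odd odd_one⟩, add_sub_cancel 1 m⟩
  · exact ⟨0, Or.inr (Or.inl ⟨rfl, Even.zero⟩), m,
      Or.inr (Or.inl ⟨rfl, even_of_mem_S₁ hm hd⟩), zero_add m⟩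
  · have h4 : 4 ∣ m := by
      rcases hm with ⟨rfl, -⟩ | ⟨rfl, -⟩ | ⟨-, h⟩ <;> [norm_num at hcd; norm_num at hcd; exact h]
    exact ⟨0, Or.inr (Or.inr ⟨rfl, dvd_zero 4⟩), m, Or.inr (Or.inr ⟨rfl, h4⟩), zero_add m⟩

lemma setOf_add_zsmul_del_mem_R01x_eq_S₁ {u : Vkl k l} (hu0 : u.1 = 0)
    (hu : ∃ m₀ : ℤ, u + m₀ • del ∈ R01x k l) :
    {m : ℤ | u + m • del ∈ R01x k l} = S₁ (nrmSq u) := by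
  obtain ⟨m₀, hm₀⟩ := hu
  ext m
  obtain ⟨h₂, hclass⟩ := (add_zsmul_del_mem_R01x_iff hu0).1 hm₀
  rw [Set.mem_ofPred_eq, add_zsmul_del_mem_R01x_iff hu0, nrmSq_eq_sum_sq_snd_snd hu0 h₂]
  constructor
  · rintro ⟨-, ⟨h, hm⟩ | ⟨h, hm⟩ | ⟨h, hm⟩⟩
    · exact Or.inl ⟨by simp [sum_sq_of_mem_axialVectors h], hm⟩
    · exact Or.inr (Or.inl ⟨sum_sq_of_mem_diagonalVectors h, hm⟩)
    · exact Or.inr (Or.inr ⟨by norm_num [sum_sq_of_mem_axialVectors h], hm⟩)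
  · intro hm
    refine ⟨h₂, ?_⟩
    rcases hclass with ⟨h, -⟩ | ⟨h, -⟩ | ⟨h, -⟩
    · norm_num [S₁, sum_sq_of_mem_axialVectors h] at hm
      exact Or.inl ⟨h, hm⟩
    · norm_num [S₁, sum_sq_of_mem_diagonalVectors h] at hm
      exact Or.inr (Or.inl ⟨h, hm⟩)
    · norm_num [S₁, sum_sq_of_mem_axialVectors h] at hm
      exact Or.inr (Or.inr ⟨h, hm⟩)

lemma mem_axialVectors_one_of_nrmSq_eq_one {u : Vkl k l} (hu0 : u.1 = 0)
    (hu : ∃ m₀ : ℤ, u + m₀ • del ∈ R01x k l) (h : nrmSq u = 1) : u.2.2 ∈ axialVectors l 1 := by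
  obtain ⟨m₀, hm₀⟩ := hu
  obtain ⟨h₂, ⟨hax, -⟩ | ⟨hdiag, -⟩ | ⟨hax, -⟩⟩ := (add_zsmul_del_mem_R01x_iff hu0).1 hm₀
  · exact hax
  · norm_num [nrmSq_eq_sum_sq_snd_snd hu0 h₂, sum_sq_of_mem_diagonalVectors hdiag] at h
  · norm_num [nrmSq_eq_sum_sq_snd_snd hu0 h₂, sum_sq_of_mem_axialVectors hax] at h

lemma nrmSq_add_ne_one_of_R01x {u v : Vkl k l} (hu0 : u.1 = 0) (hv0 : v.1 = 0)
    (hu : ∃ m : ℤ, u + m • del ∈ R01x k l) (hv : ∃ m : ℤ, v + m • del ∈ R01x k l)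
    (huv : ∃ m : ℤ, (u + v) + m • del ∈ R01x k l)
    (hlen : nrmSq u = nrmSq v) (hlen' : nrmSq v ≤ nrmSq (u + v)) : nrmSq (u + v) ≠ 1 := by
  intro h
  obtain ⟨mv, hmv⟩ := hv
  have hv1 : nrmSq v = 1 := le_antisymm (h ▸ hlen')
    (one_le_of_mem_S₁ ((setOf_add_zsmul_del_mem_R01x_eq_S₁ hv0 ⟨mv, hmv⟩).subset hmv))
  have huv0 : (u + v).1 = 0 := by simp [hu0, hv0]
  refine add_notMem_axialVectors one_ne_zero
    (mem_axialVectors_one_of_nrmSq_eq_one hu0 hu (hlen.trans hv1))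
    (mem_axialVectors_one_of_nrmSq_eq_one hv0 ⟨mv, hmv⟩ hv1) ?_
  simpa using mem_axialVectors_one_of_nrmSq_eq_one huv0 huv h

end FirstComponent

section SecondComponent

variable {k l : ℕ}

lemma add_zsmul_del_mem_R02x_iff {u : Vkl k l} (hu : u.1 = 0) {m : ℤ} :
    u + m • del ∈ R02x k l ↔ u.2.2 = 0 ∧
      (u.2.1 ∈ axialVectors k 1 ∧ Even m ∨ u.2.1 ∈ diagonalVectors k ∧ Even m ∨
        u.2.1 ∈ axialVectors k 2 ∧ m % 4 = 2) := by
  constructor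
  · rintro ((⟨m', σ, i, hσ, he⟩ | ⟨m', σ, τ, i, r, hσ, hτ, hir, he⟩) | ⟨m', σ, i, hσ, he⟩) <;>
      simp [Prod.ext_iff, del, eps, hu, ← Pi.single_smul] at he <;>
      rcases he with ⟨hm, h₂, h₃⟩
    · exact ⟨h₃, Or.inl ⟨⟨σ, hσ, i, by rw [h₂, mul_one]⟩,
        even_iff_two_dvd.2 ⟨m', (Int.cast_inj (α := ℝ)).1 (by push_cast; exact hm)⟩⟩⟩
    · exact ⟨h₃, Or.inr (Or.inl ⟨⟨σ, hσ, τ, hτ, i, r, hir, h₂⟩,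
        even_iff_two_dvd.2 ⟨m', (Int.cast_inj (α := ℝ)).1 (by push_cast; exact hm)⟩⟩)⟩
    · have hm' : m = 4 * m' + 2 := (Int.cast_inj (α := ℝ)).1 (by push_cast; exact hm)
      exact ⟨h₃, Or.inr (Or.inr ⟨⟨σ, hσ, i, h₂⟩, by omega⟩)⟩
  · rintro ⟨h₃, ⟨⟨σ, hσ, i, h₂⟩, m', rfl⟩ | ⟨⟨σ, hσ, τ, hτ, i, r, hir, h₂⟩, m', rfl⟩ |
      ⟨⟨σ, hσ, i, h₂⟩, hm⟩⟩
    · exact Or.inl (Or.inl ⟨m', σ, i, hσ, by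
        simp [Prod.ext_iff, del, eps, hu, h₂, h₃, ← Pi.single_smul]; ring⟩)
    · exact Or.inl (Or.inr ⟨m', σ, τ, i, r, hσ, hτ, hir, by
        simp [Prod.ext_iff, del, eps, hu, h₂, h₃, ← Pi.single_smul]; ring⟩)
    · obtain ⟨m', rfl⟩ : ∃ m', m = 4 * m' + 2 := ⟨m / 4, by omega⟩
      exact Or.inr ⟨m', σ, i, hσ, by
        simp [Prod.ext_iff, del, eps, hu, h₂, h₃, ← Pi.single_smul]⟩

/-- `S₂ c` is the set `S_u(2)` of every `u ∈ Ṙ₀(2)^×` with `‖u‖² = c`. -/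
def S₂ (c : ℝ) : Set ℤ :=
  {m | (c = 1 ∨ c = 2) ∧ Even m ∨ c = 4 ∧ m % 4 = 2}

lemma le_four_of_mem_S₂ {c : ℝ} {m : ℤ} (hm : m ∈ S₂ c) : c ≤ 4 := by
  rcases hm with ⟨rfl | rfl, -⟩ | ⟨rfl, -⟩ <;> norm_num

lemma even_of_mem_S₂ {d : ℝ} {m : ℤ} (hm : m ∈ S₂ d) : Even m := by
  rcases hm with ⟨-, h⟩ | ⟨-, h⟩
  exacts [h, Int.even_iff.2 (by omega)]

lemma S₂_subset_add {c d : ℝ} (hc : (S₂ c).Nonempty) (hc4 : c ≠ 4) :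
    S₂ d ⊆ S₂ c + S₂ c := by
  obtain ⟨m₀, ⟨hc12, -⟩ | ⟨rfl, -⟩⟩ := hc
  · intro m hm
    exact Set.mem_add.2 ⟨0, Or.inl ⟨hc12, Even.zero⟩, m, Or.inl ⟨hc12, even_of_mem_S₂ hm⟩,
      zero_add m⟩
  · exact absurd rfl hc4

lemma setOf_add_zsmul_del_mem_R02x_eq_S₂ {u : Vkl k l} (hu0 : u.1 = 0)
    (hu : ∃ m₀ : ℤ, u + m₀ • del ∈ R02x k l) :
    {m : ℤ | u + m • del ∈ R02x k l} = S₂ (nrmSq u) := by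
  obtain ⟨m₀, hm₀⟩ := hu
  ext m
  obtain ⟨h₃, hclass⟩ := (add_zsmul_del_mem_R02x_iff hu0).1 hm₀
  rw [Set.mem_ofPred_eq, add_zsmul_del_mem_R02x_iff hu0, nrmSq_eq_sum_sq_snd_fst hu0 h₃]
  constructor
  · rintro ⟨-, ⟨h, hm⟩ | ⟨h, hm⟩ | ⟨h, hm⟩⟩
    · exact Or.inl ⟨Or.inl (by simp [sum_sq_of_mem_axialVectors h]), hm⟩
    · exact Or.inl ⟨Or.inr (sum_sq_of_mem_diagonalVectors h), hm⟩
    · exact Or.inr ⟨by norm_num [sum_sq_of_mem_axialVectors h], hm⟩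
  · intro hm
    refine ⟨h₃, ?_⟩
    rcases hclass with ⟨h, -⟩ | ⟨h, -⟩ | ⟨h, -⟩
    · norm_num [S₂, sum_sq_of_mem_axialVectors h] at hm
      exact Or.inl ⟨h, hm⟩
    · norm_num [S₂, sum_sq_of_mem_diagonalVectors h] at hm
      exact Or.inr (Or.inl ⟨h, hm⟩)
    · norm_num [S₂, sum_sq_of_mem_axialVectors h] at hm
      exact Or.inr (Or.inr ⟨h, hm⟩)

lemma mem_axialVectors_two_of_nrmSq_eq_four {u : Vkl k l} (hu0 : u.1 = 0)
    (hu : ∃ m₀ : ℤ, u + m₀ • del ∈ R02x k l) (h : nrmSq u = 4) : u.2.1 ∈ axialVectors k 2 := by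
  obtain ⟨m₀, hm₀⟩ := hu
  obtain ⟨h₃, ⟨hax, -⟩ | ⟨hdiag, -⟩ | ⟨hax, -⟩⟩ := (add_zsmul_del_mem_R02x_iff hu0).1 hm₀
  · norm_num [nrmSq_eq_sum_sq_snd_fst hu0 h₃, sum_sq_of_mem_axialVectors hax] at h
  · norm_num [nrmSq_eq_sum_sq_snd_fst hu0 h₃, sum_sq_of_mem_diagonalVectors hdiag] at h
  · exact hax

lemma nrmSq_ne_four_of_R02x {u v : Vkl k l} (hu0 : u.1 = 0) (hv0 : v.1 = 0)
    (hu : ∃ m : ℤ, u + m • del ∈ R02x k l) (hv : ∃ m : ℤ, v + m • del ∈ R02x k l)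
    (huv : ∃ m : ℤ, (u + v) + m • del ∈ R02x k l)
    (hlen : nrmSq u = nrmSq v) (hlen' : nrmSq v ≤ nrmSq (u + v)) : nrmSq u ≠ 4 := by
  intro h
  have huv0 : (u + v).1 = 0 := by simp [hu0, hv0]
  obtain ⟨muv, hmuv⟩ := huv
  have huv4 : nrmSq (u + v) = 4 := le_antisymm
    (le_four_of_mem_S₂ ((setOf_add_zsmul_del_mem_R02x_eq_S₂ huv0 ⟨muv, hmuv⟩).subset hmuv))
    (by linarith)
  refine add_notMem_axialVectors two_ne_zero
    (mem_axialVectors_two_of_nrmSq_eq_four hu0 hu h)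
    (mem_axialVectors_two_of_nrmSq_eq_four hv0 hv (hlen ▸ h)) ?_
  simpa using mem_axialVectors_two_of_nrmSq_eq_four huv0 ⟨muv, hmuv⟩ huv4

end SecondComponent

theorem S_sum_A4_general (k l : ℕ) (W : Set (Vkl k l)) (hW : W = R01x k l ∨ W = R02x k l)
    (u v : Vkl k l)
    (hu0 : u.1 = 0) (hv0 : v.1 = 0)
    (hu : u ≠ 0 ∧ ∃ m : ℤ, u + m • del ∈ W)
    (hv : v ≠ 0 ∧ ∃ m : ℤ, v + m • del ∈ W)
    (hlen : nrm u = nrm v) (hlen' : nrm v ≤ nrm (u + v)) :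
    ∀ m : ℤ, (u + v) + m • del ∈ W →
      ∃ m₁ m₂ : ℤ, m = m₁ + m₂ ∧ u + m₁ • del ∈ W ∧ v + m₂ • del ∈ W := by
  intro m hm
  have huv0 : (u + v).1 = 0 := by simp [hu0, hv0]
  rw [nrm_eq_nrm_iff] at hlen
  rw [nrm_le_nrm_iff] at hlen'
  obtain ⟨-, m₀, hm₀⟩ := hu
  rcases hW with rfl | rfl
  · have hSu := setOf_add_zsmul_del_mem_R01x_eq_S₁ hu0 ⟨m₀, hm₀⟩
    have hSv := setOf_add_zsmul_del_mem_R01x_eq_S₁ hv0 hv.2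
    rw [← hlen] at hSv
    obtain ⟨m₁, hm₁, m₂, hm₂, rfl⟩ := S₁_subset_add (hSu ▸ ⟨m₀, hm₀⟩) (hlen ▸ hlen')
      (nrmSq_add_ne_one_of_R01x hu0 hv0 ⟨m₀, hm₀⟩ hv.2 ⟨m, hm⟩ hlen hlen')
      ((setOf_add_zsmul_del_mem_R01x_eq_S₁ huv0 ⟨m, hm⟩).subset hm)
    exact ⟨m₁, m₂, rfl, hSu.symm.subset hm₁, hSv.symm.subset hm₂⟩
  · have hSu := setOf_add_zsmul_del_mem_R02x_eq_S₂ hu0 ⟨m₀, hm₀⟩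
    have hSv := setOf_add_zsmul_del_mem_R02x_eq_S₂ hv0 hv.2
    rw [← hlen] at hSv
    obtain ⟨m₁, hm₁, m₂, hm₂, rfl⟩ := S₂_subset_add (hSu ▸ ⟨m₀, hm₀⟩)
      (nrmSq_ne_four_of_R02x hu0 hv0 ⟨m₀, hm₀⟩ hv.2 ⟨m, hm⟩ hlen hlen')
      ((setOf_add_zsmul_del_mem_R02x_eq_S₂ huv0 ⟨m, hm⟩).subset hm)
    exact ⟨m₁, m₂, rfl, hSu.symm.subset hm₁, hSv.symm.subset hm₂⟩

/-- Property (2.8) of the paper for type `A(2k,2ℓ)⁽⁴⁾`: for `i = 1, 2`, if `u`,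
`v` and `u + v` lie in `Ṙ₀(i)^×` and `‖u‖ = ‖v‖ ≤ ‖u+v‖`, then
`S_{u+v}(i) ⊆ S_u(i) + S_v(i)`. -/
theorem S_sum_A4 (k l : ℕ) (W : Set (Vkl k l)) (hW : W = R01x k l ∨ W = R02x k l)
    (u v : Vkl k l)
    (hu0 : u.1 = 0) (hv0 : v.1 = 0)
    (hu : u ≠ 0 ∧ ∃ m : ℤ, u + m • del ∈ W)
    (hv : v ≠ 0 ∧ ∃ m : ℤ, v + m • del ∈ W)
    (huv : u + v ≠ 0 ∧ ∃ m : ℤ, (u + v) + m • del ∈ W)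
    (hlen : nrm u = nrm v) (hlen' : nrm v ≤ nrm (u + v)) :
    ∀ m : ℤ, (u + v) + m • del ∈ W →
      ∃ m₁ m₂ : ℤ, m = m₁ + m₂ ∧ u + m₁ • del ∈ W ∧ v + m₂ • del ∈ W :=
  S_sum_A4_general k l W hW u v hu0 hv0 hu hv hlen hlen'
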